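/- arXiv:1805.02351 — 5 statements merged into one kernel-verified Lean document; each statement's English description precedes it below -/
import Mathlib

section
/- There is a universal constant C such that for every even n = 2m and every nondeterministic branching program P of width W ≥ 2 and length T ≥ 2 on n Boolean inputs, there exist an even natural number t ≤ C·(1+log₂W)·(1+log₂T) and maps G, H : {0,1}^m → ({0,1}^t → {0,1}), with H(b) ∧-invariant for every b ∈ {0,1}^m, such that for all a, b ∈ {0,1}^m: P accepts the concatenated input (a,b) if and only if p_alt(G(a), H(b)) = 0 (false). -/
/-!
Savitch's divide-and-conquer, played as a game. Unfolding the alternation, `p_alt(u, v) = false`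
says `∃ i₁ ∀ i₂ ∃ i₃ ⋯ ∀ i_t, ¬(u ∧ v)`. A path from layer `i` to layer `j` exists iff some node
`c` of the middle layer is reached from the start and reaches the end. So a block of `2w + 2`
coordinates lets the existential player name `c` in binary (`W ≤ 2 ^ w`) and the universal player
choose the half to check; after `log T` halvings one edge remains. The universal player then names
a value `σ` of the bit it reads: Alice evaluates the edge with `σ` in place of Bob's input, and Bob
rejects unless `σ` is his bit. Bob only ever reads universal coordinates, so his tensor is
∧-invariant, and the order is `(2w + 2)(log T + 2) = O(log W · log T)`.
-/

/-- Alternating fold over the Boolean hypercube: flag `true` means the first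
remaining coordinate is combined with AND, `false` means OR; flags alternate. -/
def altFold : (n : ℕ) → Bool → ((Fin n → Bool) → Bool) → Bool
  | 0, _, f => f Fin.elim0
  | n + 1, q, f =>
    if q then
      altFold n (!q) (fun x => f (Fin.cons false x)) &&
        altFold n (!q) (fun x => f (Fin.cons true x))
    else
      altFold n (!q) (fun x => f (Fin.cons false x)) ||
        altFold n (!q) (fun x => f (Fin.cons true x))

/-- Alternating product `p_alt(u,v)`: AND over odd-indexed coordinates
(i₁, i₃, …) and OR over even-indexed ones (i₂, i₄, …), applied to the
coordinatewise AND of `u` and `v`. -/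
def altProd {t : ℕ} (u v : (Fin t → Bool) → Bool) : Bool :=
  altFold t true fun x => u x && v x

/-- A tensor is ∧-invariant if it does not depend on the odd-indexed
coordinates i₁, i₃, …, i_{t-1} (which have 0-based indices 0, 2, …). -/
def AndInvariant {t : ℕ} (u : (Fin t → Bool) → Bool) : Prop :=
  ∀ x y : Fin t → Bool, (∀ i : Fin t, i.1 % 2 = 1 → x i = y i) → u x = u y

/-- A tensor is max-invariant if it does not depend on the even-indexed
coordinates i₂, i₄, …, i_t (which have 0-based indices 1, 3, …). -/
def MaxInvariant {t : ℕ} (u : (Fin t → Bool) → Bool) : Prop :=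
  ∀ x y : Fin t → Bool, (∀ i : Fin t, i.1 % 2 = 0 → x i = y i) → u x = u y

/-- Alternating tropical fold: flag `true` means the first remaining coordinate
is averaged (𝔼), `false` means it is maximized; flags alternate. -/
def tropFold : (n : ℕ) → Bool → ((Fin n → Bool) → ℚ) → ℚ
  | 0, _, f => f Fin.elim0
  | n + 1, q, f =>
    if q then
      (tropFold n (!q) (fun x => f (Fin.cons false x)) +
        tropFold n (!q) (fun x => f (Fin.cons true x))) / 2
    else
      max (tropFold n (!q) (fun x => f (Fin.cons false x)))
        (tropFold n (!q) (fun x => f (Fin.cons true x)))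

/-- Tropical similarity `s(u,v)`: 𝔼 over odd-indexed coordinates and max over
even-indexed ones, applied to the coordinatewise product of `u` and `v`. -/
def tropSim {t : ℕ} (u v : (Fin t → Bool) → Bool) : ℚ :=
  tropFold t true fun x => (if u x then (1 : ℚ) else 0) * (if v x then (1 : ℚ) else 0)

/-- A nondeterministic branching program on `n` Boolean inputs: `len` layers,
each of `width` nodes; layer `i` (0-based, for `i + 1 < len`) reads input
variable `var i`; `edge i u v m` says there is an edge from node `u` of layer
`i` to node `v` of layer `i+1` marked with the bit `m`. -/
structure BP (n : ℕ) where
  len : ℕ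
  width : ℕ
  var : ℕ → Fin n
  edge : ℕ → Fin width → Fin width → Bool → Prop

/-- `P` accepts `x` iff there is a path from the start node (layer 0, node 0)
to the accepting node (last layer, node 0) using only edges whose mark equals
the value of the variable associated with the edge's starting layer. -/
def BP.Accepts {n : ℕ} (P : BP n) (x : Fin n → Bool) : Prop :=
  ∃ p : ℕ → Fin P.width, (p 0).1 = 0 ∧ (p (P.len - 1)).1 = 0 ∧
    ∀ i : ℕ, i + 1 < P.len → P.edge i (p i) (p (i + 1)) (x (P.var i))

/-- Streams are padded with `false` beyond the quantified coordinates, which spares the `Fin`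
casts of the recursion below. -/
def altFoldStream : ℕ → Bool → (Stream' Bool → Bool) → Bool
  | 0, _, F => F (Stream'.const false)
  | n + 1, q, F =>
    if q then
      altFoldStream n (!q) (fun s => F (Stream'.cons false s)) &&
        altFoldStream n (!q) (fun s => F (Stream'.cons true s))
    else
      altFoldStream n (!q) (fun s => F (Stream'.cons false s)) ||
        altFoldStream n (!q) (fun s => F (Stream'.cons true s))

def padFalse {n : ℕ} (x : Fin n → Bool) : Stream' Bool :=
  List.ofFn x ++ₛ Stream'.const false

lemma padFalse_cons {n : ℕ} (c : Bool) (x : Fin n → Bool) :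
    padFalse (Fin.cons c x) = Stream'.cons c (padFalse x) := by
  simp [padFalse, List.ofFn_succ, Stream'.cons_append_stream]

lemma get_padFalse {n : ℕ} (x : Fin n → Bool) (l : ℕ) :
    (padFalse x).get l = if h : l < n then x ⟨l, h⟩ else false := by
  split_ifs with h
  · simp [padFalse, Stream'.get_append_left l (List.ofFn x) _ (by simpa using h)]
  · obtain ⟨k, rfl⟩ := Nat.exists_eq_add_of_le (not_lt.mp h)
    simpa [padFalse] using Stream'.get_append_right k (List.ofFn x) (Stream'.const false)

lemma altFold_comp_padFalse (n : ℕ) (q : Bool) (F : Stream' Bool → Bool) :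
    altFold n q (fun x => F (padFalse x)) = altFoldStream n q F := by
  induction n generalizing q F with
  | zero => rfl
  | succ n ih =>
    simp only [altFold, altFoldStream, padFalse_cons]
    rw [ih (!q) fun s => F (Stream'.cons false s), ih (!q) fun s => F (Stream'.cons true s)]

lemma altFoldStream_add_two_eq_false_iff (n : ℕ) (F : Stream' Bool → Bool) :
    altFoldStream (n + 2) true F = false ↔
      ∃ c, ∀ c',
        altFoldStream n true (fun s => F (Stream'.cons c (Stream'.cons c' s))) = false := by
  simp only [altFoldStream, Bool.not_true, Bool.not_false, Bool.false_eq_true, if_false, if_true,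
    Bool.and_eq_false_iff, Bool.or_eq_false_iff, Bool.exists_bool, Bool.forall_bool]

def bitsValue : ℕ → Stream' Bool → ℕ
  | 0, _ => 0
  | w + 1, s => Nat.bit s.head (bitsValue w s.tail)

lemma exists_lt_two_pow_succ_iff (w : ℕ) (p : ℕ → Prop) :
    (∃ N < 2 ^ (w + 1), p N) ↔ ∃ c : Bool, ∃ N < 2 ^ w, p (Nat.bit c N) := by
  constructor
  · rintro ⟨N, hN, hp⟩
    rw [← Nat.bit_testBit_zero_shiftRight_one N] at hN hp
    exact ⟨_, _, Nat.bit_lt_two_pow_succ_iff.mp hN, hp⟩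
  · rintro ⟨c, N, hN, hp⟩
    exact ⟨_, Nat.bit_lt_two_pow_succ_iff.mpr hN, hp⟩

lemma altFoldStream_two_mul_add_eq_false_iff (w n : ℕ) (K : ℕ → Stream' Bool → Bool) :
    altFoldStream (2 * w + n) true (fun s => K (bitsValue w s.even) (s.drop (2 * w))) = false ↔
      ∃ N < 2 ^ w, altFoldStream n true (K N) = false := by
  induction w generalizing K with
  | zero => simp [bitsValue]
  | succ w ih =>
    have hdrop : ∀ c c' (s : Stream' Bool),
        (Stream'.cons c (Stream'.cons c' s)).drop (2 * (w + 1)) = s.drop (2 * w) := by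
      intro c c' s
      rw [show 2 * (w + 1) = (2 * w).succ.succ by omega, Stream'.drop_succ, Stream'.tail_cons,
        Stream'.drop_succ, Stream'.tail_cons]
    rw [show 2 * (w + 1) + n = 2 * w + n + 2 by ring, altFoldStream_add_two_eq_false_iff,
      exists_lt_two_pow_succ_iff]
    simp only [Stream'.even_cons_cons, hdrop, bitsValue, Stream'.head_cons, Stream'.tail_cons,
      forall_const]
    exact exists_congr fun c => ih fun N => K (Nat.bit c N)

/-- The existential coordinates `0, 2, …, 2w - 2` spell `N` in binary, the universal coordinate
`2w + 1` is `σ`, and the other coordinates of the block are dummies. -/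
def readBlock (w : ℕ) (K : ℕ → Bool → Stream' Bool → Bool) (s : Stream' Bool) : Bool :=
  K (bitsValue w s.even) (s.get (2 * w + 1)) (s.drop (2 * w + 2))

lemma altFoldStream_readBlock_eq_false_iff (w n : ℕ) (K : ℕ → Bool → Stream' Bool → Bool) :
    altFoldStream (2 * w + 2 + n) true (readBlock w K) = false ↔
      ∃ N < 2 ^ w, ∀ σ, altFoldStream n true (K N σ) = false := by
  have hK : readBlock w K =
      fun s => (fun N s' => K N (s'.get 1) (s'.drop 2)) (bitsValue w s.even) (s.drop (2 * w)) := by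
    funext s
    simp only [readBlock, Stream'.get_drop, Stream'.drop_drop]
  rw [show 2 * w + 2 + n = 2 * w + (n + 2) by ring, hK]
  refine (altFoldStream_two_mul_add_eq_false_iff w (n + 2)
    fun N s' => K N (s'.get 1) (s'.drop 2)).trans
    (exists_congr fun N => and_congr_right fun _ => ?_)
  rw [altFoldStream_add_two_eq_false_iff]
  exact ⟨fun ⟨_, h⟩ => h, fun h => ⟨false, h⟩⟩

lemma altFoldStream_readBlock_and_eq_false_iff (w n : ℕ) (K K' : ℕ → Bool → Stream' Bool → Bool) :
    altFoldStream (2 * w + 2 + n) true (fun s => readBlock w K s && readBlock w K' s) = false ↔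
      ∃ N < 2 ^ w, ∀ σ, altFoldStream n true (fun s => K N σ s && K' N σ s) = false :=
  altFoldStream_readBlock_eq_false_iff w n fun N σ s => K N σ s && K' N σ s

namespace BP

variable {n : ℕ} (P : BP n) (x : Fin n → Bool)

def Reach (i j : ℕ) (u v : Fin P.width) : Prop :=
  ∃ p : ℕ → Fin P.width, p i = u ∧ p j = v ∧
    ∀ l, i ≤ l → l < j → P.edge l (p l) (p (l + 1)) (x (P.var l))

lemma reach_add_one_iff (i : ℕ) (u v : Fin P.width) :
    P.Reach x i (i + 1) u v ↔ P.edge i u v (x (P.var i)) := by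
  constructor
  · rintro ⟨p, rfl, rfl, hp⟩
    exact hp i le_rfl (Nat.lt_succ_self i)
  · intro h
    refine ⟨fun l => if l ≤ i then u else v, by simp, by simp, fun l hil hlj => ?_⟩
    obtain rfl : l = i := by omega
    simpa using h

lemma reach_iff_exists_mid {i k j : ℕ} (hik : i ≤ k) (hkj : k ≤ j) (u v : Fin P.width) :
    P.Reach x i j u v ↔ ∃ c, P.Reach x i k u c ∧ P.Reach x k j c v := by
  constructor
  · rintro ⟨p, hpi, hpj, hp⟩
    exact ⟨p k, ⟨p, hpi, rfl, fun l h₁ h₂ => hp l h₁ (by omega)⟩,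
      ⟨p, rfl, hpj, fun l h₁ h₂ => hp l (by omega) h₂⟩⟩
  · rintro ⟨c, ⟨p, hpi, hpk, hp⟩, ⟨q, hqk, hqj, hq⟩⟩
    have hj : (if j ≤ k then p j else q j) = v := by
      rcases hkj.eq_or_lt with rfl | h
      · simp [hpk, ← hqk, hqj]
      · simp [h.not_ge, hqj]
    refine ⟨fun l => if l ≤ k then p l else q l, by simp [hik, hpi], hj, fun l h₁ h₂ => ?_⟩
    rcases lt_trichotomy l k with hl | rfl | hl
    · simpa [hl.le, Nat.succ_le_of_lt hl] using hp l h₁ hl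
    · simpa [hpk, ← hqk] using hq l le_rfl h₂
    · simpa [hl.not_ge, (hl.trans (Nat.lt_succ_self l)).not_ge] using hq l hl.le h₂

lemma accepts_iff_reach (h₀ : 0 < P.width) :
    P.Accepts x ↔ P.Reach x 0 (P.len - 1) ⟨0, h₀⟩ ⟨0, h₀⟩ := by
  refine exists_congr fun p => ?_
  simp only [Fin.ext_iff]
  refine and_congr_right fun _ => and_congr_right fun _ => ?_
  exact ⟨fun h l _ hl => h l (by omega), fun h l hl => h l (Nat.zero_le l) (by omega)⟩

end BP

def nodeOfNat {W : ℕ} (u : Fin W) (N : ℕ) : Fin W :=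
  if h : N < W then ⟨N, h⟩ else u

lemma exists_lt_two_pow_nodeOfNat_iff {W w : ℕ} (hW : W ≤ 2 ^ w) (u : Fin W) (p : Fin W → Prop) :
    (∃ N < 2 ^ w, p (nodeOfNat u N)) ↔ ∃ v, p v := by
  refine ⟨fun ⟨N, _, h⟩ => ⟨_, h⟩, fun ⟨v, h⟩ => ⟨v, v.2.trans_le hW, ?_⟩⟩
  simpa [nodeOfNat] using h

lemma forall_guess_eq_false_iff {m n : ℕ} (E : Bool → Prop) [DecidablePred E]
    (a : Fin m → Bool) (b : Fin n → Bool) (k : Fin (m + n)) :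
    (∀ σ, (!decide (E (Fin.append a (fun _ => σ) k)) &&
        Fin.append (fun _ => true) (fun l => σ == b l) k) = false) ↔ E (Fin.append a b k) := by
  induction k using Fin.addCases with
  | left k => simp
  | right k => cases hb : b k <;> simp [hb]

section Tensors

variable {m : ℕ} (P : BP (m + m)) (w : ℕ)

open scoped Classical in
noncomputable def aliceTensor (a : Fin m → Bool) :
    ℕ → ℕ → ℕ → Fin P.width → Fin P.width → Stream' Bool → Bool
  | 0, i, _, u, v => readBlock w fun _ σ _ =>
      !decide (P.edge i u v (Fin.append a (fun _ => σ) (P.var i)))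
  | r + 1, i, j, u, v => readBlock w fun N σ rest =>
      if j ≤ i + 1 then aliceTensor a r i j u v rest
      else if σ then aliceTensor a r ((i + j) / 2) j (nodeOfNat u N) v rest
      else aliceTensor a r i ((i + j) / 2) u (nodeOfNat u N) rest

def bobTensor (b : Fin m → Bool) : ℕ → ℕ → ℕ → Stream' Bool → Bool
  | 0, i, _ => readBlock w fun _ σ _ => Fin.append (fun _ => true) (fun l => σ == b l) (P.var i)
  | r + 1, i, j => readBlock w fun _ σ rest =>
      if j ≤ i + 1 then bobTensor b r i j rest
      else if σ then bobTensor b r ((i + j) / 2) j rest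
      else bobTensor b r i ((i + j) / 2) rest

lemma bobTensor_congr_odd (b : Fin m → Bool) (r i j : ℕ) {s s' : Stream' Bool}
    (h : ∀ l, s.get (2 * l + 1) = s'.get (2 * l + 1)) :
    bobTensor P w b r i j s = bobTensor P w b r i j s' := by
  induction r generalizing i j s s' with
  | zero => simp only [bobTensor, readBlock, h w]
  | succ r ih =>
    have hrest : ∀ l,
        (s.drop (2 * w + 2)).get (2 * l + 1) = (s'.drop (2 * w + 2)).get (2 * l + 1) := by
      intro l
      simpa only [Stream'.get_drop, show 2 * w + 2 + (2 * l + 1) = 2 * (w + 1 + l) + 1 by ring]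
        using h (w + 1 + l)
    simp only [bobTensor, readBlock, h w, ih _ _ hrest]

open scoped Classical in
lemma altFoldStream_tensors_eq_false_iff (hw : P.width ≤ 2 ^ w) (a b : Fin m → Bool) (r : ℕ)
    {i j : ℕ} (hij : i < j) (hji : j ≤ i + 2 ^ r) (u v : Fin P.width) :
    altFoldStream ((2 * w + 2) * (r + 1)) true
        (fun s => aliceTensor P w a r i j u v s && bobTensor P w b r i j s) = false ↔
      P.Reach (Fin.append a b) i j u v := by
  induction r generalizing i j u v with
  | zero =>
    obtain rfl : j = i + 1 := by omega
    simp only [aliceTensor, bobTensor]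
    rw [show (2 * w + 2) * (0 + 1) = 2 * w + 2 + 0 by ring,
      altFoldStream_readBlock_and_eq_false_iff, P.reach_add_one_iff,
      ← forall_guess_eq_false_iff (P.edge i u v) a b (P.var i)]
    exact ⟨fun ⟨_, _, h⟩ => h, fun h => ⟨0, by positivity, h⟩⟩
  | succ r ih =>
    simp only [aliceTensor, bobTensor]
    rw [show (2 * w + 2) * (r + 1 + 1) = 2 * w + 2 + (2 * w + 2) * (r + 1) by ring,
      altFoldStream_readBlock_and_eq_false_iff]
    by_cases hshort : j ≤ i + 1
    · simp only [if_pos hshort, ih hij (by omega)]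
      exact ⟨fun ⟨_, _, h⟩ => h false, fun h => ⟨0, by positivity, fun _ => h⟩⟩
    · have hmid : i < (i + j) / 2 ∧ (i + j) / 2 < j := by omega
      simp only [if_neg hshort, Bool.forall_bool, Bool.false_eq_true, if_false, if_true,
        ih hmid.1 (by omega), ih hmid.2 (by omega)]
      exact (exists_lt_two_pow_nodeOfNat_iff hw u
        fun c => P.Reach _ i _ u c ∧ P.Reach _ _ j c v).trans
          (P.reach_iff_exists_mid _ hmid.1.le hmid.2.le u v).symm

end Tensors

lemma natLog_add_two_le_two_mul_one_add_logb (n : ℕ) :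
    (Nat.log 2 n : ℝ) + 2 ≤ 2 * (1 + Real.logb 2 n) := by
  have := Real.natLog_le_logb n 2
  have : (0 : ℝ) ≤ Nat.log 2 n := Nat.cast_nonneg _
  push_cast at *
  linarith

lemma cast_tensorOrder_le (W T : ℕ) :
    (((2 * (Nat.log 2 W + 1) + 2) * (Nat.log 2 T + 1 + 1) : ℕ) : ℝ) ≤
      8 * (1 + Real.logb 2 W) * (1 + Real.logb 2 T) := by
  have := mul_le_mul (natLog_add_two_le_two_mul_one_add_logb W)
    (natLog_add_two_le_two_mul_one_add_logb T) (by positivity)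
    (le_trans (by positivity) (natLog_add_two_le_two_mul_one_add_logb W))
  push_cast
  linarith

/-- There is a universal constant `C` such that for every even
`n = 2m` and every nondeterministic branching program `P` of width `W ≥ 2` and
length `T ≥ 2` on `n` Boolean inputs, there are an even `t ≤ C·(1+log₂W)·(1+log₂T)`
and maps `G, H` from `{0,1}^m` to tensors of order `t`, with each `H b`
∧-invariant, such that `P` accepts `(a,b)` iff `p_alt(G a, H b) = false`. -/
theorem bp_to_oapt :
    ∃ C : ℝ, 0 < C ∧
      ∀ (m : ℕ) (P : BP (m + m)), 2 ≤ P.width → 2 ≤ P.len →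
        ∃ t : ℕ, Even t ∧
          (t : ℝ) ≤ C * (1 + Real.logb 2 P.width) * (1 + Real.logb 2 P.len) ∧
          ∃ G H : (Fin m → Bool) → ((Fin t → Bool) → Bool),
            (∀ b : Fin m → Bool, AndInvariant (H b)) ∧
            ∀ a b : Fin m → Bool,
              P.Accepts (Fin.append a b) ↔ altProd (G a) (H b) = false := by
  refine ⟨8, by norm_num, fun m P hW hT => ?_⟩
  set w := Nat.log 2 P.width + 1
  set k := Nat.log 2 P.len + 1
  have hw : P.width ≤ 2 ^ w := (Nat.lt_pow_succ_log_self one_lt_two _).le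
  have hk : P.len < 2 ^ k := Nat.lt_pow_succ_log_self one_lt_two _
  have h₀ : 0 < P.width := by omega
  refine ⟨(2 * w + 2) * (k + 1), ⟨(w + 1) * (k + 1), by ring⟩, cast_tensorOrder_le _ _,
    fun a x => aliceTensor P w a k 0 (P.len - 1) ⟨0, h₀⟩ ⟨0, h₀⟩ (padFalse x),
    fun b x => bobTensor P w b k 0 (P.len - 1) (padFalse x), ?_, fun a b => ?_⟩
  · intro b x y hxy
    refine bobTensor_congr_odd P w b k 0 (P.len - 1) fun l => ?_
    rw [get_padFalse, get_padFalse]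
    split_ifs with h
    · exact hxy _ (by simp only; omega)
    · rfl
  · rw [P.accepts_iff_reach _ h₀, ← altFoldStream_tensors_eq_false_iff P w hw a b k (by omega)
      (by omega), ← altFold_comp_padFalse]
    rfl
end

section
/- There is a universal constant C such that for every even natural number t there exist a finite alphabet Σ with |Σ| ≤ C·2^t and maps S, T from tensors of order t to strings over Σ of length exactly 2^t, such that for all tensors u, v of order t: LCS(S(u), T(v)) = 2^{t/2} · s(u,v). -/
/-- `LCSv a b`: the maximum length of a common (not necessarily contiguous)
subsequence of the lists `a` and `b`. -/
noncomputable def LCSv {α : Type} (a b : List α) : ℕ :=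
  sSup {n | ∃ c : List α, c.length = n ∧ c.Sublist a ∧ c.Sublist b}

/-!
The strings are built by recursion on the coordinates of the tensor. Both `S u` and `T v`
concatenate the encodings of the two half-tensors (first coordinate `0` or `1`), written over
disjoint alphabets. At an averaging layer the halves appear in the same order in `S u` and `T v`,
so their LCS values add up; at a maximizing layer `T v` lists them in the opposite order, so a
common subsequence lives in one half only and LCS is the maximum of the two. At a single entry the
two letters agree exactly when `u x = v x = 1`. Every averaging layer doubles the scale, so the
`t / 2` of them account for the factor `2 ^ (t / 2)`.
-/

namespace List

variable {α : Type*} {p : α → Bool} {c l₁ l₂ : List α}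

theorem Sublist.of_sublist_append_left_of_forall (h : c.Sublist (l₁ ++ l₂))
    (hc : ∀ x ∈ c, p x) (h₂ : ∀ x ∈ l₂, ¬p x) : c.Sublist l₁ :=
  h.of_sublist_append_left fun x hx hx₂ => h₂ x hx₂ (hc x hx)

theorem Sublist.of_sublist_append_right_of_forall (h : c.Sublist (l₁ ++ l₂))
    (hc : ∀ x ∈ c, ¬p x) (h₁ : ∀ x ∈ l₁, p x) : c.Sublist l₂ :=
  h.of_sublist_append_right fun x hx hx₁ => hc x hx (h₁ x hx₁)

theorem pairwise_append_of_forall_of_forall_not (h₁ : ∀ x ∈ l₁, p x) (h₂ : ∀ x ∈ l₂, ¬p x) :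
    (l₁ ++ l₂).Pairwise fun x y => p y → p x :=
  pairwise_append.mpr
    ⟨pairwise_of_forall_mem_list fun x hx _ _ _ => h₁ x hx,
      pairwise_of_forall_mem_list fun _ _ y hy hpy => absurd hpy (h₂ y hy),
      fun x hx _ _ _ => h₁ x hx⟩

end List

namespace LCSv

open List

variable {α β : Type}

theorem bddAbove (a b : List α) :
    BddAbove {n | ∃ c : List α, c.length = n ∧ c.Sublist a ∧ c.Sublist b} :=
  ⟨a.length, fun _ ⟨_, hc, ha, _⟩ => hc ▸ ha.length_le⟩

theorem length_le {a b c : List α} (ha : c.Sublist a) (hb : c.Sublist b) :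
    c.length ≤ LCSv a b :=
  le_csSup (bddAbove a b) ⟨c, rfl, ha, hb⟩

theorem exists_length_eq (a b : List α) :
    ∃ c : List α, c.length = LCSv a b ∧ c.Sublist a ∧ c.Sublist b :=
  Nat.sSup_mem (s := {n | ∃ c : List α, c.length = n ∧ c.Sublist a ∧ c.Sublist b})
    ⟨0, [], rfl, nil_sublist a, nil_sublist b⟩ (bddAbove a b)

theorem le_of_forall {a b : List α} {n : ℕ}
    (h : ∀ c : List α, c.Sublist a → c.Sublist b → c.length ≤ n) : LCSv a b ≤ n := by
  obtain ⟨c, hc, ha, hb⟩ := exists_length_eq a b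
  exact hc ▸ h c ha hb

theorem mono {a a' b b' : List α} (ha : a.Sublist a') (hb : b.Sublist b') :
    LCSv a b ≤ LCSv a' b' := by
  obtain ⟨c, hc, hca, hcb⟩ := exists_length_eq a b
  exact hc ▸ length_le (hca.trans ha) (hcb.trans hb)

theorem singleton [DecidableEq α] (x y : α) : LCSv [x] [y] = if x = y then 1 else 0 := by
  refine le_antisymm (le_of_forall fun c hx hy => ?_) ?_
  · rcases sublist_singleton.mp hx with rfl | rfl
    · exact Nat.zero_le _
    · rcases sublist_singleton.mp hy with h | h <;> simp_all
  · split_ifs with h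
    · exact h ▸ length_le (Sublist.refl [x]) (Sublist.refl [x])
    · exact Nat.zero_le _

theorem map {f : α → β} (hf : Function.Injective f) (a b : List α) :
    LCSv (a.map f) (b.map f) = LCSv a b := by
  refine le_antisymm (le_of_forall fun d hda hdb => ?_) ?_
  · obtain ⟨c, hca, rfl⟩ := sublist_map_iff.mp hda
    obtain ⟨c', hcb, hcc'⟩ := sublist_map_iff.mp hdb
    rw [← map_injective_iff.mpr hf hcc'] at hcb
    simpa using length_le hca hcb
  · obtain ⟨c, hc, hca, hcb⟩ := exists_length_eq a b
    simpa [hc] using length_le (hca.map f) (hcb.map f)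

section Separated

variable {p : α → Bool} {a₁ a₂ b₁ b₂ : List α}

theorem append_append (ha₁ : ∀ x ∈ a₁, p x) (hb₁ : ∀ x ∈ b₁, p x)
    (ha₂ : ∀ x ∈ a₂, ¬p x) (hb₂ : ∀ x ∈ b₂, ¬p x) :
    LCSv (a₁ ++ a₂) (b₁ ++ b₂) = LCSv a₁ b₁ + LCSv a₂ b₂ := by
  refine le_antisymm (le_of_forall fun c ha hb => ?_) ?_
  · have hp : ∀ x ∈ c.filter p, p x := fun x hx => of_mem_filter hx
    have hnp : ∀ x ∈ c.filter (!p ·), ¬p x := fun x hx => by simpa using of_mem_filter hx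
    rw [c.length_eq_length_filter_add p]
    exact Nat.add_le_add
      (length_le (filter_sublist.trans ha |>.of_sublist_append_left_of_forall hp ha₂)
        (filter_sublist.trans hb |>.of_sublist_append_left_of_forall hp hb₂))
      (length_le (filter_sublist.trans ha |>.of_sublist_append_right_of_forall hnp ha₁)
        (filter_sublist.trans hb |>.of_sublist_append_right_of_forall hnp hb₁))
  · obtain ⟨c₁, hc₁, hc₁a, hc₁b⟩ := exists_length_eq a₁ b₁
    obtain ⟨c₂, hc₂, hc₂a, hc₂b⟩ := exists_length_eq a₂ b₂
    simpa [hc₁, hc₂] using length_le (hc₁a.append hc₂a) (hc₁b.append hc₂b)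

-- A common subsequence lists its `p`-letters before its other letters (as in `a₁ ++ a₂`) and
-- after them (as in `b₂ ++ b₁`), so it cannot contain both kinds.
theorem append_append_swap (ha₁ : ∀ x ∈ a₁, p x) (hb₁ : ∀ x ∈ b₁, p x)
    (ha₂ : ∀ x ∈ a₂, ¬p x) (hb₂ : ∀ x ∈ b₂, ¬p x) :
    LCSv (a₁ ++ a₂) (b₂ ++ b₁) = max (LCSv a₁ b₁) (LCSv a₂ b₂) := by
  have hb₁' : ∀ x ∈ b₁, ¬(!p x) := by simpa using hb₁
  have hb₂' : ∀ x ∈ b₂, (!p x) := by simpa using hb₂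
  refine le_antisymm (le_of_forall fun c ha hb => ?_) (max_le ?_ ?_)
  · have hc : c.Pairwise fun x y => p x = p y :=
      (((pairwise_append_of_forall_of_forall_not ha₁ ha₂).sublist ha).and
        ((pairwise_append_of_forall_of_forall_not hb₂' hb₁').sublist hb)).imp fun {x y} h => by
          cases hx : p x <;> cases hy : p y <;> simp_all
    rcases c with _ | ⟨z, l⟩
    · exact Nat.zero_le _
    have hz : ∀ x ∈ z :: l, p x = p z := by
      simp only [mem_cons, forall_eq_or_imp, true_and]
      exact fun x hx => (rel_of_pairwise_cons hc hx).symm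
    cases hpz : p z
    · have hnp : ∀ x ∈ z :: l, ¬p x := by simpa [hpz] using hz
      exact le_max_of_le_right (length_le (ha.of_sublist_append_right_of_forall hnp ha₁)
        (hb.of_sublist_append_left_of_forall (by simpa using hnp) hb₁'))
    · have hp : ∀ x ∈ z :: l, p x := by simpa [hpz] using hz
      exact le_max_of_le_left (length_le (ha.of_sublist_append_left_of_forall hp ha₂)
        (hb.of_sublist_append_right_of_forall (by simpa using hp) hb₂'))
  · exact mono (sublist_append_left a₁ a₂) (sublist_append_right b₂ b₁)
  · exact mono (sublist_append_right a₁ a₂) (sublist_append_left b₂ b₁)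

end Separated

end LCSv

-- A letter records the entry it encodes, so letters coming from different entries never match.
abbrev GadgetLetter (n : ℕ) := (Fin n → Bool) × Fin 3

namespace GadgetLetter

variable {n : ℕ}

def cons (b : Bool) : GadgetLetter n → GadgetLetter (n + 1) :=
  Prod.map (Fin.cons (α := fun _ => Bool) b) id

theorem cons_injective (b : Bool) : Function.Injective (cons (n := n) b) :=
  (Fin.cons_right_injective (α := fun _ => Bool) b).prodMap Function.injective_id

theorem forall_mem_map_cons (b : Bool) (l : List (GadgetLetter n)) :
    ∀ s ∈ l.map (cons b), s.1 0 = b := by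
  rintro _ hs
  obtain ⟨s, -, rfl⟩ := List.mem_map.mp hs
  rfl

end GadgetLetter

def gadgetS : (n : ℕ) → ((Fin n → Bool) → Bool) → List (GadgetLetter n)
  | 0, u => [(Fin.elim0, if u Fin.elim0 then 0 else 1)]
  | n + 1, u =>
    (gadgetS n fun x => u (Fin.cons false x)).map (GadgetLetter.cons false) ++
      (gadgetS n fun x => u (Fin.cons true x)).map (GadgetLetter.cons true)

def gadgetT : (n : ℕ) → Bool → ((Fin n → Bool) → Bool) → List (GadgetLetter n)
  | 0, _, v => [(Fin.elim0, if v Fin.elim0 then 0 else 2)]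
  | n + 1, q, v =>
    if q then
      (gadgetT n (!q) fun x => v (Fin.cons false x)).map (GadgetLetter.cons false) ++
        (gadgetT n (!q) fun x => v (Fin.cons true x)).map (GadgetLetter.cons true)
    else
      (gadgetT n (!q) fun x => v (Fin.cons true x)).map (GadgetLetter.cons true) ++
        (gadgetT n (!q) fun x => v (Fin.cons false x)).map (GadgetLetter.cons false)

theorem length_gadgetS : ∀ (n : ℕ) (u : (Fin n → Bool) → Bool), (gadgetS n u).length = 2 ^ n
  | 0, _ => rfl
  | n + 1, u => by simp [gadgetS, length_gadgetS n, pow_succ, mul_two]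

theorem length_gadgetT :
    ∀ (n : ℕ) (q : Bool) (v : (Fin n → Bool) → Bool), (gadgetT n q v).length = 2 ^ n
  | 0, _, _ => rfl
  | n + 1, q, v => by cases q <;> simp [gadgetT, length_gadgetT n, pow_succ, mul_two]

theorem LCSv_gadget (n : ℕ) (q : Bool) (u v : (Fin n → Bool) → Bool) :
    (LCSv (gadgetS n u) (gadgetT n q v) : ℚ) = 2 ^ ((n + q.toNat) / 2) *
      tropFold n q fun x => (if u x then (1 : ℚ) else 0) * (if v x then (1 : ℚ) else 0) := by
  induction n generalizing q with
  | zero => cases q <;> cases hu : u Fin.elim0 <;> cases hv : v Fin.elim0 <;>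
      simp [gadgetS, gadgetT, tropFold, LCSv.singleton, hu, hv]
  | succ n ih =>
    have hfalse (l : List (GadgetLetter n)) :
        ∀ s ∈ l.map (GadgetLetter.cons false), (!s.1 0) = true :=
      fun s hs => by simp [GadgetLetter.forall_mem_map_cons false l s hs]
    have htrue (l : List (GadgetLetter n)) :
        ∀ s ∈ l.map (GadgetLetter.cons true), ¬(!s.1 0) = true :=
      fun s hs => by simp [GadgetLetter.forall_mem_map_cons true l s hs]
    cases q
    · rw [gadgetS, gadgetT, if_neg Bool.false_ne_true,
        LCSv.append_append_swap (hfalse _) (hfalse _) (htrue _) (htrue _),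
        LCSv.map (GadgetLetter.cons_injective _), LCSv.map (GadgetLetter.cons_injective _)]
      push_cast
      rw [ih, ih, tropFold, if_neg Bool.false_ne_true, Bool.not_false, Bool.toNat_false,
        Bool.toNat_true, add_zero, ← mul_max_of_nonneg _ _ (by positivity)]
    · rw [gadgetS, gadgetT, if_pos rfl,
        LCSv.append_append (hfalse _) (hfalse _) (htrue _) (htrue _),
        LCSv.map (GadgetLetter.cons_injective _), LCSv.map (GadgetLetter.cons_injective _)]
      push_cast
      rw [ih, ih, tropFold, if_pos rfl, Bool.not_true, Bool.toNat_true, Bool.toNat_false,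
        add_zero, show (n + 1 + 1) / 2 = n / 2 + 1 by omega, pow_succ]
      ring

/-- There is a universal constant `C` such that for every even
`t` there are an alphabet `Fin k` with `k ≤ C·2^t` and maps `S, T` from tensors
of order `t` to strings over `Fin k` of length exactly `2^t`, such that
`LCS(S u, T v) = 2^{t/2} · s(u,v)` for all tensors `u, v` of order `t`. -/
theorem tropSim_to_LCS_gadget :
    ∃ C : ℕ, 0 < C ∧
      ∀ t : ℕ, Even t →
        ∃ k : ℕ, k ≤ C * 2 ^ t ∧
          ∃ S T : ((Fin t → Bool) → Bool) → List (Fin k),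
            (∀ u : (Fin t → Bool) → Bool, (S u).length = 2 ^ t) ∧
            (∀ v : (Fin t → Bool) → Bool, (T v).length = 2 ^ t) ∧
            ∀ u v : (Fin t → Bool) → Bool,
              (LCSv (S u) (T v) : ℚ) = 2 ^ (t / 2) * tropSim u v := by
  refine ⟨3, by norm_num, fun t ht => ?_⟩
  let e := Fintype.equivFin (GadgetLetter t)
  have hcard : Fintype.card (GadgetLetter t) = 3 * 2 ^ t := by simp [mul_comm]
  refine ⟨Fintype.card (GadgetLetter t), hcard.le, fun u => (gadgetS t u).map e,
    fun v => (gadgetT t true v).map e, fun u => by simp [length_gadgetS],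
    fun v => by simp [length_gadgetT], fun u v => ?_⟩
  have hscale : (t + true.toNat) / 2 = t / 2 := by obtain ⟨m, rfl⟩ := ht; simp; omega
  rw [LCSv.map e.injective, LCSv_gadget, hscale, tropSim]
end

section
/- There is a universal constant C such that for every even natural number t with D = 2^t and all finite sets A, B of tensors of order t, there exist an alphabet Σ with |Σ| ≤ C·D and sets A', B' of strings over Σ of length D together with bijections a ↦ a' (A → A') and b ↦ b' (B → B') satisfying LCS(a', b') = √D · s(a,b) for all (a,b) ∈ A×B. Consequently, if some pair (a,b) ∈ A×B has s(a,b) = 1 then some pair (a',b') ∈ A'×B' has LCS(a',b') = √D, while for any ε > 0, if every pair (a,b) ∈ A×B has s(a,b) < ε then every pair (a',b') ∈ A'×B' has LCS(a',b') < √D·ε. -/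
namespace LCSAux

lemma lcs_bdd {α : Type} (a b : List α) :
    BddAbove {n | ∃ c : List α, c.length = n ∧ c.Sublist a ∧ c.Sublist b} :=
  ⟨a.length, fun _ ⟨c, hc, h1, _⟩ => hc ▸ h1.length_le⟩

lemma le_LCSv {α : Type} {a b c : List α} (h1 : c.Sublist a) (h2 : c.Sublist b) :
    c.length ≤ LCSv a b := le_csSup (lcs_bdd a b) ⟨c, rfl, h1, h2⟩

lemma LCSv_spec {α : Type} (a b : List α) :
    ∃ c : List α, c.length = LCSv a b ∧ c.Sublist a ∧ c.Sublist b := by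
  have hne : {n | ∃ c : List α, c.length = n ∧ c.Sublist a ∧ c.Sublist b}.Nonempty :=
    ⟨0, ⟨[], rfl, List.nil_sublist _, List.nil_sublist _⟩⟩
  exact Nat.sSup_mem hne (lcs_bdd a b)

lemma LCSv_le {α : Type} {a b : List α} {n : ℕ}
    (h : ∀ c : List α, c.Sublist a → c.Sublist b → c.length ≤ n) : LCSv a b ≤ n := by
  obtain ⟨c, hc, h1, h2⟩ := LCSv_spec a b
  exact hc ▸ h c h1 h2

lemma LCSv_single {α : Type} [DecidableEq α] (x y : α) : LCSv [x] [y] = if x = y then 1 else 0 := by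
  split
  · next heq =>
    subst heq
    refine le_antisymm (LCSv_le fun c hc _ => by simpa using hc.length_le) ?_
    simpa using le_LCSv (a := [x]) (b := [x]) (c := [x]) (.refl _) (.refl _)
  · next hne =>
    refine Nat.le_zero.1 (LCSv_le fun c hc1 hc2 => ?_)
    rcases List.sublist_singleton.1 hc1 with rfl | rfl
    · simp
    · exact absurd (List.sublist_singleton.1 hc2) (by simp [hne])

end LCSAux
namespace LCSAux

lemma nil_of_small_big {k : ℕ} {e : List ℕ} (hs : ∀ x ∈ e, x < k) (hb : ∀ x ∈ e, k ≤ x) :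
    e = [] := by
  cases e with
  | nil => rfl
  | cons a l => exact absurd (hs a (by simp)) (not_lt.2 (hb a (by simp)))

lemma split_eq {k : ℕ} {c1 c2 d1 d2 : List ℕ} (h : c1 ++ c2 = d1 ++ d2)
    (hc1 : ∀ x ∈ c1, x < k) (hc2 : ∀ x ∈ c2, k ≤ x)
    (hd1 : ∀ x ∈ d1, x < k) (hd2 : ∀ x ∈ d2, k ≤ x) : c1 = d1 ∧ c2 = d2 := by
  rcases List.append_eq_append_iff.1 h with ⟨e, he1, he2⟩ | ⟨e, he1, he2⟩
  · have he : e = [] :=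
      nil_of_small_big (fun x hx => hd1 x (he1 ▸ List.mem_append_right _ hx))
        (fun x hx => hc2 x (he2 ▸ List.mem_append_left _ hx))
    subst he; simp_all
  · have he : e = [] :=
      nil_of_small_big (fun x hx => hc1 x (he1 ▸ List.mem_append_right _ hx))
        (fun x hx => hd2 x (he2 ▸ List.mem_append_left _ hx))
    subst he; simp_all

lemma LCSv_append_sum {k : ℕ} {a1 a2 b1 b2 : List ℕ}
    (ha1 : ∀ x ∈ a1, x < k) (ha2 : ∀ x ∈ a2, k ≤ x)
    (hb1 : ∀ x ∈ b1, x < k) (hb2 : ∀ x ∈ b2, k ≤ x) :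
    LCSv (a1 ++ a2) (b1 ++ b2) = LCSv a1 b1 + LCSv a2 b2 := by
  apply le_antisymm
  · apply LCSv_le; intro c hca hcb
    obtain ⟨c1, c2, rfl, h1, h2⟩ := List.sublist_append_iff.1 hca
    obtain ⟨d1, d2, hcd, h3, h4⟩ := List.sublist_append_iff.1 hcb
    obtain ⟨e1, e2⟩ := split_eq hcd (fun x hx => ha1 x (h1.subset hx))
      (fun x hx => ha2 x (h2.subset hx)) (fun x hx => hb1 x (h3.subset hx))
      (fun x hx => hb2 x (h4.subset hx))
    rw [List.length_append]
    exact Nat.add_le_add (le_LCSv h1 (e1 ▸ h3)) (le_LCSv h2 (e2 ▸ h4))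
  · obtain ⟨c, hc, h1, h2⟩ := LCSv_spec a1 b1
    obtain ⟨d, hd, h3, h4⟩ := LCSv_spec a2 b2
    have := le_LCSv (h1.append h3) (h2.append h4)
    rw [List.length_append, hc, hd] at this
    exact this

lemma LCSv_append_max {k : ℕ} {a1 a2 b1 b2 : List ℕ}
    (ha1 : ∀ x ∈ a1, x < k) (ha2 : ∀ x ∈ a2, k ≤ x)
    (hb1 : ∀ x ∈ b1, x < k) (hb2 : ∀ x ∈ b2, k ≤ x) :
    LCSv (a1 ++ a2) (b2 ++ b1) = max (LCSv a1 b1) (LCSv a2 b2) := by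
  apply le_antisymm
  · apply LCSv_le; intro c hca hcb
    obtain ⟨c1, c2, rfl, h1, h2⟩ := List.sublist_append_iff.1 hca
    obtain ⟨d2, d1, hcd, h4, h3⟩ := List.sublist_append_iff.1 hcb
    have hc1 : ∀ x ∈ c1, x < k := fun x hx => ha1 x (h1.subset hx)
    have hc2 : ∀ x ∈ c2, k ≤ x := fun x hx => ha2 x (h2.subset hx)
    have hd1 : ∀ x ∈ d1, x < k := fun x hx => hb1 x (h3.subset hx)
    have hd2 : ∀ x ∈ d2, k ≤ x := fun x hx => hb2 x (h4.subset hx)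
    rcases List.append_eq_append_iff.1 hcd with ⟨e, he1, he2⟩ | ⟨e, he1, he2⟩
    · -- d2 = c1 ++ e, c2 = e ++ d1
      have hc1nil : c1 = [] :=
        nil_of_small_big hc1 (fun x hx => hd2 x (he1 ▸ List.mem_append_left _ hx))
      have hd1nil : d1 = [] :=
        nil_of_small_big hd1 (fun x hx => hc2 x (he2 ▸ List.mem_append_right _ hx))
      subst hc1nil hd1nil
      have he : c2 = d2 := by simp only [List.nil_append, List.append_nil] at he1 he2; rw [he2, he1]
      calc ([] ++ c2 : List ℕ).length = c2.length := by simp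
        _ ≤ LCSv a2 b2 := le_LCSv h2 (he ▸ h4)
        _ ≤ _ := le_max_right _ _
    · -- c1 = d2 ++ e, d1 = e ++ c2
      have hd2nil : d2 = [] :=
        nil_of_small_big (fun x hx => hc1 x (he1 ▸ List.mem_append_left _ hx)) hd2
      have hc2nil : c2 = [] :=
        nil_of_small_big (fun x hx => hd1 x (he2 ▸ List.mem_append_right _ hx)) hc2
      subst hd2nil hc2nil
      have he : c1 = d1 := by simp only [List.nil_append, List.append_nil] at he1 he2; rw [he1, he2]
      calc (c1 ++ [] : List ℕ).length = c1.length := by simp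
        _ ≤ LCSv a1 b1 := le_LCSv h1 (he ▸ h3)
        _ ≤ _ := le_max_left _ _
  · refine max_le ?_ ?_
    · obtain ⟨c, hc, h1, h2⟩ := LCSv_spec a1 b1
      exact hc ▸ le_LCSv (h1.trans (List.sublist_append_left _ _))
        (h2.trans (List.sublist_append_right _ _))
    · obtain ⟨c, hc, h1, h2⟩ := LCSv_spec a2 b2
      exact hc ▸ le_LCSv (h1.trans (List.sublist_append_right _ _))
        (h2.trans (List.sublist_append_left _ _))

lemma eq_of_map_eq {α β : Type} {h : α → β} :
    ∀ (c1 c2 : List α), (∀ x ∈ c1, ∀ y ∈ c2, h x = h y → x = y) →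
      c1.map h = c2.map h → c1 = c2
  | [], [], _, _ => rfl
  | [], _ :: _, _, hm => by simp at hm
  | _ :: _, [], _, hm => by simp at hm
  | a :: l1, b :: l2, H, hm => by
    simp only [List.map_cons, List.cons.injEq] at hm
    have hab : a = b := H a (by simp) b (by simp) hm.1
    have : l1 = l2 :=
      eq_of_map_eq l1 l2 (fun x hx y hy => H x (by simp [hx]) y (by simp [hy])) hm.2
    rw [hab, this]

lemma LCSv_map {α β : Type} {h : α → β} {a b : List α}
    (H : ∀ x ∈ a, ∀ y ∈ b, h x = h y → x = y) :
    LCSv (a.map h) (b.map h) = LCSv a b := by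
  apply le_antisymm
  · apply LCSv_le; intro c hca hcb
    obtain ⟨c1, hc1, rfl⟩ := List.sublist_map_iff.1 hca
    obtain ⟨c2, hc2, heq⟩ := List.sublist_map_iff.1 hcb
    have hcc : c1 = c2 :=
      eq_of_map_eq c1 c2 (fun x hx y hy => H x (hc1.subset hx) y (hc2.subset hy)) heq
    rw [List.length_map]
    exact le_LCSv hc1 (hcc ▸ hc2)
  · apply LCSv_le; intro c h1 h2
    have := le_LCSv (h1.map h) (h2.map h)
    simpa using this

end LCSAux
def sub2 {t : ℕ} (u : (Fin (t + 2) → Bool) → Bool) (i j : Bool) : (Fin t → Bool) → Bool :=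
  fun x => u (Fin.cons i (Fin.cons j x))

def encF : (t : ℕ) → ((Fin t → Bool) → Bool) → List ℕ
  | 0, u => [if u Fin.elim0 then 0 else 1]
  | 1, _ => []
  | (t + 2), u =>
    (encF t (sub2 u false false) ++ (encF t (sub2 u false true)).map (· + 3 * 2 ^ t)) ++
      ((encF t (sub2 u true false)).map (· + 2 * (3 * 2 ^ t)) ++
        (encF t (sub2 u true true)).map (· + 3 * (3 * 2 ^ t)))

def encG : (t : ℕ) → ((Fin t → Bool) → Bool) → List ℕ
  | 0, v => [if v Fin.elim0 then 0 else 2]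
  | 1, _ => []
  | (t + 2), v =>
    ((encG t (sub2 v false true)).map (· + 3 * 2 ^ t) ++ encG t (sub2 v false false)) ++
      ((encG t (sub2 v true true)).map (· + 3 * (3 * 2 ^ t)) ++
        (encG t (sub2 v true false)).map (· + 2 * (3 * 2 ^ t)))

namespace LCSAux

lemma encF_length : ∀ m : ℕ, ∀ u : (Fin (2 * m) → Bool) → Bool,
    (encF (2 * m) u).length = 2 ^ (2 * m) := by
  intro m
  induction m with
  | zero => intro u; simp [encF]
  | succ m ih =>
    intro u
    show (encF (2 * m + 2) u).length = 2 ^ (2 * m + 2)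
    rw [encF]
    simp only [List.length_append, List.length_map, ih]
    ring

lemma encG_length : ∀ m : ℕ, ∀ v : (Fin (2 * m) → Bool) → Bool,
    (encG (2 * m) v).length = 2 ^ (2 * m) := by
  intro m
  induction m with
  | zero => intro v; simp [encG]
  | succ m ih =>
    intro v
    show (encG (2 * m + 2) v).length = 2 ^ (2 * m + 2)
    rw [encG]
    simp only [List.length_append, List.length_map, ih]
    ring

lemma encF_bound : ∀ m : ℕ, ∀ u : (Fin (2 * m) → Bool) → Bool,
    ∀ x ∈ encF (2 * m) u, x < 3 * 2 ^ (2 * m) := by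
  intro m
  induction m with
  | zero => intro u x hx; fin_cases hx <;> split <;> norm_num
  | succ m ih =>
    intro u x hx
    show x < 3 * 2 ^ (2 * m + 2)
    have h4 : (2 : ℕ) ^ (2 * m + 2) = 4 * 2 ^ (2 * m) := by ring
    have hx2 : x ∈ encF (2 * m + 2) u := hx
    rw [encF] at hx2
    simp only [List.mem_append, List.mem_map] at hx2
    rcases hx2 with ((hx | ⟨y, hy, rfl⟩) | (⟨y, hy, rfl⟩ | ⟨y, hy, rfl⟩))
    · have := ih _ x hx; omega
    · have := ih _ y hy; omega
    · have := ih _ y hy; omega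
    · have := ih _ y hy; omega

lemma encG_bound : ∀ m : ℕ, ∀ v : (Fin (2 * m) → Bool) → Bool,
    ∀ x ∈ encG (2 * m) v, x < 3 * 2 ^ (2 * m) := by
  intro m
  induction m with
  | zero => intro v x hx; fin_cases hx <;> split <;> norm_num
  | succ m ih =>
    intro v x hx
    show x < 3 * 2 ^ (2 * m + 2)
    have h4 : (2 : ℕ) ^ (2 * m + 2) = 4 * 2 ^ (2 * m) := by ring
    have hx2 : x ∈ encG (2 * m + 2) v := hx
    rw [encG] at hx2
    simp only [List.mem_append, List.mem_map] at hx2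
    rcases hx2 with ((⟨y, hy, rfl⟩ | hx) | (⟨y, hy, rfl⟩ | ⟨y, hy, rfl⟩))
    · have := ih _ y hy; omega
    · have := ih _ x hx; omega
    · have := ih _ y hy; omega
    · have := ih _ y hy; omega

lemma tropSim_rec {t : ℕ} (u v : (Fin (t + 2) → Bool) → Bool) :
    tropSim u v =
      (max (tropSim (sub2 u false false) (sub2 v false false))
          (tropSim (sub2 u false true) (sub2 v false true)) +
        max (tropSim (sub2 u true false) (sub2 v true false))
          (tropSim (sub2 u true true) (sub2 v true true))) / 2 := by
  show tropFold (t + 2) true _ = _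
  rw [tropFold]
  simp only [Bool.not_true, if_true]
  rw [tropFold, tropFold]
  simp only [Bool.not_false, if_false]
  rfl

end LCSAux
namespace LCSAux

lemma add_inj_aux (c : ℕ) : ∀ x y : ℕ, x + c = y + c → x = y := by omega

lemma LCSv_map_add (c : ℕ) (a b : List ℕ) :
    LCSv (a.map (· + c)) (b.map (· + c)) = LCSv a b :=
  LCSv_map (fun x _ y _ h => add_inj_aux c x y h)

lemma main_eq : ∀ m : ℕ, ∀ u v : (Fin (2 * m) → Bool) → Bool,
    (LCSv (encF (2 * m) u) (encG (2 * m) v) : ℚ) = 2 ^ m * tropSim u v := by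
  intro m
  induction m with
  | zero =>
    intro u v
    cases hu : u Fin.elim0 <;> cases hv : v Fin.elim0 <;>
      simp [encF, encG, LCSv_single, tropSim, tropFold, hu, hv]
  | succ m ih =>
    intro u v
    set k := 3 * 2 ^ (2 * m) with hk
    have hkpos : 0 < k := by positivity
    show (LCSv (encF (2 * m + 2) u) (encG (2 * m + 2) v) : ℚ) = 2 ^ (m + 1) * tropSim u v
    rw [encF, encG]
    -- abbreviations
    have hFb : ∀ i j, ∀ x ∈ encF (2 * m) (sub2 u i j), x < k := fun i j => encF_bound m _
    have hGb : ∀ i j, ∀ x ∈ encG (2 * m) (sub2 v i j), x < k := fun i j => encG_bound m _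
    -- outer sum split at threshold 2k
    rw [LCSv_append_sum (k := 2 * k)
      (by intro x hx; rcases List.mem_append.1 hx with h | h
          · exact lt_of_lt_of_le (hFb false false x h) (by omega)
          · obtain ⟨y, hy, rfl⟩ := List.mem_map.1 h; have := hFb false true y hy; omega)
      (by intro x hx; rcases List.mem_append.1 hx with h | h <;>
            obtain ⟨y, hy, rfl⟩ := List.mem_map.1 h <;> omega)
      (by intro x hx; rcases List.mem_append.1 hx with h | h
          · obtain ⟨y, hy, rfl⟩ := List.mem_map.1 h; have := hGb false true y hy; omega
          · exact lt_of_lt_of_le (hGb false false x h) (by omega))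
      (by intro x hx; rcases List.mem_append.1 hx with h | h <;>
            obtain ⟨y, hy, rfl⟩ := List.mem_map.1 h <;> omega)]
    -- inner max splits
    rw [LCSv_append_max (k := k) (hFb false false)
      (by intro x hx; obtain ⟨y, hy, rfl⟩ := List.mem_map.1 hx; omega)
      (hGb false false)
      (by intro x hx; obtain ⟨y, hy, rfl⟩ := List.mem_map.1 hx; omega)]
    rw [LCSv_append_max (k := 3 * k)
      (by intro x hx; obtain ⟨y, hy, rfl⟩ := List.mem_map.1 hx; have := hFb true false y hy; omega)
      (by intro x hx; obtain ⟨y, hy, rfl⟩ := List.mem_map.1 hx; omega)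
      (by intro x hx; obtain ⟨y, hy, rfl⟩ := List.mem_map.1 hx; have := hGb true false y hy; omega)
      (by intro x hx; obtain ⟨y, hy, rfl⟩ := List.mem_map.1 hx; omega)]
    rw [LCSv_map_add, LCSv_map_add, LCSv_map_add]
    push_cast [Nat.cast_max]
    rw [ih, ih, ih, ih]
    rw [tropSim_rec u v]
    have h2 : (0 : ℚ) ≤ 2 ^ m := by positivity
    rw [← mul_max_of_nonneg _ _ h2, ← mul_max_of_nonneg _ _ h2]
    ring

lemma sub2_ext {t : ℕ} {u v : (Fin (t + 2) → Bool) → Bool}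
    (h : ∀ i j, sub2 u i j = sub2 v i j) : u = v := by
  funext x
  have hx : x = Fin.cons (x 0) (Fin.cons (Fin.tail x 0) (Fin.tail (Fin.tail x))) := by
    rw [Fin.cons_self_tail, Fin.cons_self_tail]
  rw [hx]
  exact congrFun (h (x 0) (Fin.tail x 0)) (Fin.tail (Fin.tail x))

lemma encF_inj : ∀ m : ℕ, Function.Injective (encF (2 * m)) := by
  intro m
  induction m with
  | zero =>
    intro u v h
    simp only [encF] at h
    have : u Fin.elim0 = v Fin.elim0 := by
      cases hu : u Fin.elim0 <;> cases hv : v Fin.elim0 <;> simp [hu, hv] at h ⊢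
    funext x
    have hx : x = Fin.elim0 := funext fun i => i.elim0
    rw [hx, this]
  | succ m ih =>
    intro u v h
    have h2 : encF (2 * m + 2) u = encF (2 * m + 2) v := h
    rw [encF, encF] at h2
    have hlen : ∀ w : (Fin (2 * m) → Bool) → Bool, ∀ c : ℕ,
        ((encF (2 * m) w).map (· + c)).length = 2 ^ (2 * m) := by
      intro w c; rw [List.length_map, encF_length]
    have hmapinj : ∀ c : ℕ, Function.Injective (List.map (· + c : ℕ → ℕ)) :=
      fun c => List.map_injective_iff.2 (fun x y => add_inj_aux c x y)
    obtain ⟨hA, hB⟩ := List.append_inj h2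
      (by rw [List.length_append, List.length_append, encF_length, encF_length, hlen, hlen])
    obtain ⟨h00, h01⟩ := List.append_inj hA (by rw [encF_length, encF_length])
    obtain ⟨h10, h11⟩ := List.append_inj hB (by rw [hlen, hlen])
    apply sub2_ext
    intro i j
    apply ih
    cases i <;> cases j
    · exact h00
    · exact hmapinj _ h01
    · exact hmapinj _ h10
    · exact hmapinj _ h11

lemma encG_inj : ∀ m : ℕ, Function.Injective (encG (2 * m)) := by
  intro m
  induction m with
  | zero =>
    intro u v h
    simp only [encG] at h
    have : u Fin.elim0 = v Fin.elim0 := by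
      cases hu : u Fin.elim0 <;> cases hv : v Fin.elim0 <;> simp [hu, hv] at h ⊢
    funext x
    have hx : x = Fin.elim0 := funext fun i => i.elim0
    rw [hx, this]
  | succ m ih =>
    intro u v h
    have h2 : encG (2 * m + 2) u = encG (2 * m + 2) v := h
    rw [encG, encG] at h2
    have hlen : ∀ w : (Fin (2 * m) → Bool) → Bool, ∀ c : ℕ,
        ((encG (2 * m) w).map (· + c)).length = 2 ^ (2 * m) := by
      intro w c; rw [List.length_map, encG_length]
    have hmapinj : ∀ c : ℕ, Function.Injective (List.map (· + c : ℕ → ℕ)) :=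
      fun c => List.map_injective_iff.2 (fun x y => add_inj_aux c x y)
    obtain ⟨hA, hB⟩ := List.append_inj h2
      (by rw [List.length_append, List.length_append, encG_length, encG_length, hlen, hlen])
    obtain ⟨h01, h00⟩ := List.append_inj hA (by rw [hlen, hlen])
    obtain ⟨h11, h10⟩ := List.append_inj hB (by rw [hlen, hlen])
    apply sub2_ext
    intro i j
    apply ih
    cases i <;> cases j
    · exact h00
    · exact hmapinj _ h01
    · exact hmapinj _ h10
    · exact hmapinj _ h11

lemma map_mod_self {k : ℕ} {l : List ℕ} (hl : ∀ x ∈ l, x < k) :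
    l.map (fun x => x % k) = l := by
  conv_rhs => rw [← List.map_id l]
  exact List.map_congr_left fun a ha => Nat.mod_eq_of_lt (hl a ha)

end LCSAux

open LCSAux

/-- There is a universal constant `C` such that for every even
`t` with `D = 2^t` and all finite sets `A, B` of tensors of order `t`, there
are an alphabet `Fin k` with `k ≤ C·D` and injective-on-`A`/`B` maps `f, g`
producing strings of length `D` with `LCS(f a, g b) = √D · s(a,b)` for all
pairs; consequently a pair with `s(a,b) = 1` yields a pair with
`LCS = √D = 2^{t/2}`, while if every pair has `s(a,b) < ε` then every pair of
strings has `LCS < √D·ε`. -/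
theorem maxTropSim_to_closest_LCS_pair :
    ∃ C : ℕ, 0 < C ∧
      ∀ t : ℕ, Even t →
        ∀ A B : Finset ((Fin t → Bool) → Bool),
          ∃ k : ℕ, k ≤ C * 2 ^ t ∧
            ∃ f g : ((Fin t → Bool) → Bool) → List (Fin k),
              (∀ a ∈ A, (f a).length = 2 ^ t) ∧
              (∀ b ∈ B, (g b).length = 2 ^ t) ∧
              Set.InjOn f A ∧ Set.InjOn g B ∧
              (∀ a ∈ A, ∀ b ∈ B, (LCSv (f a) (g b) : ℚ) = 2 ^ (t / 2) * tropSim a b) ∧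
              ((∃ a ∈ A, ∃ b ∈ B, tropSim a b = 1) →
                ∃ a ∈ A, ∃ b ∈ B, (LCSv (f a) (g b) : ℚ) = 2 ^ (t / 2)) ∧
              (∀ ε : ℚ, 0 < ε → (∀ a ∈ A, ∀ b ∈ B, tropSim a b < ε) →
                ∀ a ∈ A, ∀ b ∈ B, (LCSv (f a) (g b) : ℚ) < 2 ^ (t / 2) * ε) := by
  refine ⟨3, by norm_num, ?_⟩
  intro t ht
  obtain ⟨m, rfl⟩ := ht
  rw [show m + m = 2 * m from (two_mul m).symm]
  intro A B
  set k := 3 * 2 ^ (2 * m) with hk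
  have hkpos : 0 < k := by positivity
  refine ⟨k, le_rfl, ?_⟩
  set h : ℕ → Fin k := fun x => ⟨x % k, Nat.mod_lt _ hkpos⟩ with hh
  set f : ((Fin (2 * m) → Bool) → Bool) → List (Fin k) :=
    fun a => (encF (2 * m) a).map h with hf
  set g : ((Fin (2 * m) → Bool) → Bool) → List (Fin k) :=
    fun b => (encG (2 * m) b).map h with hg
  have hdiv : 2 * m / 2 = m := by omega
  have hvalmap : ∀ l : List ℕ, (l.map h).map Fin.val = l.map (fun x => x % k) := by
    intro l; rw [List.map_map]; rfl
  have hmain : ∀ a b, (LCSv (f a) (g b) : ℚ) = 2 ^ m * tropSim a b := by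
    intro a b
    have hc : LCSv (f a) (g b) = LCSv (encF (2 * m) a) (encG (2 * m) b) := by
      apply LCSv_map
      intro x hx y hy hxy
      have hx' := encF_bound m a x hx
      have hy' := encG_bound m b y hy
      have hxy' : x % k = y % k := congrArg Fin.val hxy
      rwa [Nat.mod_eq_of_lt hx', Nat.mod_eq_of_lt hy'] at hxy'
    rw [hc, main_eq m a b]
  refine ⟨f, g, ?_, ?_, ?_, ?_, ?_, ?_, ?_⟩
  · intro a _; rw [hf]; simp only [List.length_map]; exact encF_length m a
  · intro b _; rw [hg]; simp only [List.length_map]; exact encG_length m b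
  · have : Function.Injective f := by
      intro a b hab
      apply encF_inj m
      have h2 := congrArg (List.map Fin.val) hab
      rw [hf] at h2
      simp only at h2
      rw [hvalmap, hvalmap, map_mod_self (encF_bound m a), map_mod_self (encF_bound m b)] at h2
      exact h2
    exact this.injOn
  · have : Function.Injective g := by
      intro a b hab
      apply encG_inj m
      have h2 := congrArg (List.map Fin.val) hab
      rw [hg] at h2
      simp only at h2
      rw [hvalmap, hvalmap, map_mod_self (encG_bound m a), map_mod_self (encG_bound m b)] at h2
      exact h2
    exact this.injOn
  · intro a _ b _; rw [hdiv]; exact hmain a b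
  · rintro ⟨a, ha, b, hb, h1⟩
    exact ⟨a, ha, b, hb, by rw [hdiv, hmain a b, h1, mul_one]⟩
  · intro ε hε hs a ha b hb
    rw [hdiv, hmain a b]
    exact mul_lt_mul_of_pos_left (hs a ha b hb) (by positivity)
end

section
/- There is a universal constant C such that for every even natural number t with D = 2^t, every ε > 0, and all finite sets A, B of tensors of order t with every tensor in B max-invariant, there exist a set A' of regular expressions over {0,1,⊥}, each of length at most 2^{C·t} and with all strings in its language of length exactly D, and a set B' of strings in {0,1}^D, together with bijections a ↦ a' (A → A') and b ↦ b' (B → B'), such that: if some pair (a,b) ∈ A×B has s(a,b) = 1, then some pair (a',b') ∈ A'×B' satisfies b' ∈ L(a'); and if every pair (a,b) ∈ A×B has s(a,b) < ε, then every pair (a',b') ∈ A'×B' satisfies MaxSim(a', b') < ε. -/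
/-- The length (size) of a regular expression: number of symbols/operators. -/
def reSize {α : Type} : RegularExpression α → ℕ
  | RegularExpression.zero => 1
  | RegularExpression.epsilon => 1
  | RegularExpression.char _ => 1
  | RegularExpression.plus r s => reSize r + reSize s + 1
  | RegularExpression.comp r s => reSize r + reSize s + 1
  | RegularExpression.star r => reSize r + 1

/-- Hamming similarity of two lists (of equal length `n ≥ 1`): the fraction of
positions at which they agree. -/
def hamSim {α : Type} [DecidableEq α] (x y : List α) : ℚ :=
  ((x.zip y).countP fun p => decide (p.1 = p.2)) / x.length

/-- `maxSim R b`: the maximum Hamming similarity `HamSim(x, b)` over strings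
`x ∈ L(R)` of length `|b|` (as a supremum in `ℝ`; the set of attained values is
finite, so the supremum is the maximum whenever such an `x` exists). -/
noncomputable def maxSim {α : Type} [DecidableEq α] (R : RegularExpression α)
    (b : List α) : ℝ :=
  sSup {q : ℝ | ∃ x ∈ R.matches', x.length = b.length ∧ (hamSim x b : ℝ) = q}

/-!
Encode `a` by a regular expression mirroring the quantifier prefix of `s`: an averaged coordinate
concatenates the encodings of the two slices, a maximized one offers `r₀ r₀ + r₁ r₁`, and a leaf is
the letter `1` where `a` is `1` and `⊥` elsewhere; encode `b` by its truth table. Since `b` is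
max-invariant, its truth table is doubled at every maximized coordinate, exactly like the words of
the language. So, by induction on the order, a word fixes one slice at each maximized coordinate
and agrees with `b` in at most `2^t` times the value of the 𝔼/max expression defining `s(a, b)`;
and if `s(a, b) = 1`, choosing a slice of value `1` at each maximized coordinate yields the truth
table of `b` itself.
-/

section Slices

variable {β : Type*}

def slice {n : ℕ} (f : (Fin (n + 1) → Bool) → β) (c : Bool) : (Fin n → Bool) → β :=
  fun x => f (Fin.cons c x)

theorem eq_of_slice_eq {n : ℕ} {f g : (Fin (n + 1) → Bool) → β}
    (h : ∀ c, slice f c = slice g c) : f = g := by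
  funext x
  simpa [slice, Fin.cons_self_tail] using congrFun (h (x 0)) (Fin.tail x)

def truthTable : (n : ℕ) → ((Fin n → Bool) → β) → List β
  | 0, f => [f Fin.elim0]
  | n + 1, f => truthTable n (slice f false) ++ truthTable n (slice f true)

theorem length_truthTable {n : ℕ} (f : (Fin n → Bool) → β) :
    (truthTable n f).length = 2 ^ n := by
  induction n with
  | zero => rfl
  | succ n ih => simp only [truthTable, List.length_append, ih, pow_succ, mul_two]

theorem truthTable_injective (n : ℕ) : Function.Injective (truthTable (β := β) n) := by
  induction n with
  | zero =>
    intro f g h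
    funext x
    rw [Subsingleton.elim x Fin.elim0]
    simpa [truthTable] using h
  | succ n ih =>
    intro f g h
    obtain ⟨h₀, h₁⟩ := List.append_inj h (by rw [length_truthTable, length_truthTable])
    exact eq_of_slice_eq fun c => c.casesOn (ih h₀) (ih h₁)

end Slices

section TropFold

variable {n : ℕ}

theorem tropFold_succ_true (f : (Fin (n + 1) → Bool) → ℚ) :
    tropFold (n + 1) true f =
      (tropFold n false (slice f false) + tropFold n false (slice f true)) / 2 :=
  rfl

theorem tropFold_succ_false (f : (Fin (n + 1) → Bool) → ℚ) :
    tropFold (n + 1) false f =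
      max (tropFold n true (slice f false)) (tropFold n true (slice f true)) :=
  rfl

theorem tropFold_nonneg {q : Bool} {f : (Fin n → Bool) → ℚ} (hf : ∀ x, 0 ≤ f x) :
    0 ≤ tropFold n q f := by
  induction n generalizing q with
  | zero => exact hf _
  | succ n ih =>
    cases q
    · exact le_max_of_le_left (ih fun x => hf _)
    · have h₀ : 0 ≤ tropFold n false (slice f false) := ih fun x => hf _
      have h₁ : 0 ≤ tropFold n false (slice f true) := ih fun x => hf _
      rw [tropFold_succ_true]
      linarith

theorem tropFold_le_one {q : Bool} {f : (Fin n → Bool) → ℚ} (hf : ∀ x, f x ≤ 1) :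
    tropFold n q f ≤ 1 := by
  induction n generalizing q with
  | zero => exact hf _
  | succ n ih =>
    cases q
    · exact max_le (ih fun x => hf _) (ih fun x => hf _)
    · have h₀ : tropFold n false (slice f false) ≤ 1 := ih fun x => hf _
      have h₁ : tropFold n false (slice f true) ≤ 1 := ih fun x => hf _
      rw [tropFold_succ_true]
      linarith

end TropFold

section CoordProd

variable {n : ℕ}

def coordProd (a b : (Fin n → Bool) → Bool) : (Fin n → Bool) → ℚ :=
  fun x => (if a x then (1 : ℚ) else 0) * (if b x then (1 : ℚ) else 0)

theorem tropSim_eq_tropFold_coordProd (a b : (Fin n → Bool) → Bool) :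
    tropSim a b = tropFold n true (coordProd a b) :=
  rfl

theorem slice_coordProd (a b : (Fin (n + 1) → Bool) → Bool) (c : Bool) :
    slice (coordProd a b) c = coordProd (slice a c) (slice b c) :=
  rfl

theorem coordProd_nonneg (a b : (Fin n → Bool) → Bool) (x : Fin n → Bool) :
    0 ≤ coordProd a b x := by
  unfold coordProd; positivity

theorem coordProd_le_one (a b : (Fin n → Bool) → Bool) (x : Fin n → Bool) :
    coordProd a b x ≤ 1 := by
  unfold coordProd; split_ifs <;> norm_num

end CoordProd

/-- With `q = true` the coordinates `0, 2, 4, …` are averaged and `1, 3, …` maximized; with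
`q = false` the other way round. The predicate says that `b` ignores the maximized ones. -/
def IndepOfMaxCoords (n : ℕ) (q : Bool) (b : (Fin n → Bool) → Bool) : Prop :=
  ∀ x y : Fin n → Bool,
    (∀ i : Fin n, ((i : ℕ) % 2 = 0 ↔ q = true) → x i = y i) → b x = b y

namespace IndepOfMaxCoords

variable {n : ℕ} {q : Bool}

theorem slice {b : (Fin (n + 1) → Bool) → Bool} (h : IndepOfMaxCoords (n + 1) q b) (c : Bool) :
    IndepOfMaxCoords n (!q) (_root_.slice b c) := by
  intro x y hxy
  apply h
  refine Fin.cases (fun _ => rfl) fun j hj => hxy j ?_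
  rw [Fin.val_succ] at hj
  cases q <;> simp at hj ⊢ <;> omega

theorem slice_false_eq_slice_true {b : (Fin (n + 1) → Bool) → Bool}
    (h : IndepOfMaxCoords (n + 1) false b) : _root_.slice b false = _root_.slice b true := by
  funext x
  apply h
  refine Fin.cases (fun h₀ => absurd h₀ (by simp)) fun j _ => rfl

theorem truthTable_succ_false {b : (Fin (n + 1) → Bool) → Bool}
    (h : IndepOfMaxCoords (n + 1) false b) (c : Bool) :
    truthTable (n + 1) b = truthTable n (_root_.slice b c) ++ truthTable n (_root_.slice b c) := by
  cases c <;> simp only [truthTable, h.slice_false_eq_slice_true]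

end IndepOfMaxCoords

theorem MaxInvariant.indepOfMaxCoords {t : ℕ} {b : (Fin t → Bool) → Bool}
    (h : MaxInvariant b) : IndepOfMaxCoords t true b :=
  fun x y hxy => h x y fun i hi => hxy i (by simp [hi])

section Regex

open RegularExpression

theorem reSize_mul {α : Type} (r s : RegularExpression α) :
    reSize (r * s) = reSize r + reSize s + 1 :=
  rfl

theorem reSize_add {α : Type} (r s : RegularExpression α) :
    reSize (r + s) = reSize r + reSize s + 1 :=
  rfl

def tensorRegex :
    (n : ℕ) → Bool → ((Fin n → Bool) → Bool) → RegularExpression (Option Bool)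
  | 0, _, a => char (if a Fin.elim0 then some true else none)
  | n + 1, true, a => tensorRegex n false (slice a false) * tensorRegex n false (slice a true)
  | n + 1, false, a =>
    tensorRegex n true (slice a false) * tensorRegex n true (slice a false) +
      tensorRegex n true (slice a true) * tensorRegex n true (slice a true)

variable {n : ℕ} {a : (Fin (n + 1) → Bool) → Bool} {x : List (Option Bool)}

theorem mem_tensorRegex_succ_true :
    x ∈ (tensorRegex (n + 1) true a).matches' ↔
      ∃ u ∈ (tensorRegex n false (slice a false)).matches',
        ∃ v ∈ (tensorRegex n false (slice a true)).matches', u ++ v = x := by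
  rw [tensorRegex, matches'_mul, Language.mem_mul]

theorem mem_tensorRegex_succ_false :
    x ∈ (tensorRegex (n + 1) false a).matches' ↔
      ∃ c, ∃ u ∈ (tensorRegex n true (slice a c)).matches',
        ∃ v ∈ (tensorRegex n true (slice a c)).matches', u ++ v = x := by
  rw [tensorRegex, matches'_add, Language.mem_add, matches'_mul, matches'_mul, Language.mem_mul,
    Language.mem_mul, Bool.exists_bool]

end Regex

theorem length_of_mem_tensorRegex {n : ℕ} {q : Bool} {a : (Fin n → Bool) → Bool}
    {x : List (Option Bool)} (hx : x ∈ (tensorRegex n q a).matches') : x.length = 2 ^ n := by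
  induction n generalizing q x with
  | zero =>
    rw [tensorRegex, RegularExpression.matches'_char] at hx
    obtain rfl : x = _ := hx
    rfl
  | succ n ih =>
    obtain ⟨c₀, c₁, u, hu, v, hv, rfl⟩ : ∃ c₀ c₁,
        ∃ u ∈ (tensorRegex n (!q) (slice a c₀)).matches',
          ∃ v ∈ (tensorRegex n (!q) (slice a c₁)).matches', u ++ v = x := by
      cases q
      · obtain ⟨c, hc⟩ := mem_tensorRegex_succ_false.1 hx
        exact ⟨c, c, hc⟩
      · exact ⟨false, true, mem_tensorRegex_succ_true.1 hx⟩
    rw [List.length_append, ih hu, ih hv, pow_succ, mul_two]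

theorem tensorRegex_injective (n : ℕ) (q : Bool) : Function.Injective (tensorRegex n q) := by
  induction n generalizing q with
  | zero =>
    intro a a' h
    funext x
    rw [Subsingleton.elim x Fin.elim0]
    injection h with h
    split_ifs at h <;> simp_all
  | succ n ih =>
    intro a a' h
    refine eq_of_slice_eq fun c => ?_
    cases q <;> cases c
    · injection h with h₀; injection h₀ with h₀; exact ih true h₀
    · injection h with _ h₁; injection h₁ with h₁; exact ih true h₁
    · injection h with h₀; exact ih false h₀
    · injection h with _ h₁; exact ih false h₁

theorem reSize_tensorRegex_le (n : ℕ) (q : Bool) (a : (Fin n → Bool) → Bool) :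
    reSize (tensorRegex n q a) ≤ 8 ^ n := by
  induction n generalizing q with
  | zero => exact le_rfl
  | succ n ih =>
    have h8 : 1 ≤ 8 ^ n := Nat.one_le_pow _ _ (by norm_num)
    cases q
    · have h₀ := ih true (slice a false)
      have h₁ := ih true (slice a true)
      rw [tensorRegex, reSize_add, reSize_mul, reSize_mul, pow_succ]
      omega
    · have h₀ := ih false (slice a false)
      have h₁ := ih false (slice a true)
      rw [tensorRegex, reSize_mul, pow_succ]
      omega

section AgreeCount

variable {α : Type} [DecidableEq α]

def agreeCount (x y : List α) : ℕ :=
  (x.zip y).countP fun p => decide (p.1 = p.2)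

theorem agreeCount_append {x₁ x₂ y₁ y₂ : List α} (h : x₁.length = y₁.length) :
    agreeCount (x₁ ++ x₂) (y₁ ++ y₂) = agreeCount x₁ y₁ + agreeCount x₂ y₂ := by
  simp only [agreeCount, List.zip_append h, List.countP_append]

theorem hamSim_eq_agreeCount_div (x y : List α) : hamSim x y = agreeCount x y / x.length :=
  rfl

end AgreeCount

theorem map_some_truthTable_mem_tensorRegex {n : ℕ} {q : Bool} {a b : (Fin n → Bool) → Bool}
    (hb : IndepOfMaxCoords n q b) (h : tropFold n q (coordProd a b) = 1) :
    (truthTable n b).map some ∈ (tensorRegex n q a).matches' := by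
  induction n generalizing q with
  | zero =>
    change coordProd a b Fin.elim0 = 1 at h
    obtain ⟨ha, hb₀⟩ : a Fin.elim0 = true ∧ b Fin.elim0 = true := by
      unfold coordProd at h
      split_ifs at h <;> simp_all
    rw [tensorRegex, RegularExpression.matches'_char, ha]
    show [some (b Fin.elim0)] = [some true]
    rw [hb₀]
  | succ n ih =>
    cases q
    · rw [tropFold_succ_false] at h
      obtain ⟨c, hc⟩ : ∃ c, tropFold n true (coordProd (slice a c) (slice b c)) = 1 := by
        rcases max_choice (tropFold n true (slice (coordProd a b) false))
          (tropFold n true (slice (coordProd a b) true)) with hm | hm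
        · exact ⟨false, hm ▸ h⟩
        · exact ⟨true, hm ▸ h⟩
      have hmem := ih (hb.slice c) hc
      rw [hb.truthTable_succ_false c, List.map_append]
      exact mem_tensorRegex_succ_false.2 ⟨c, _, hmem, _, hmem, rfl⟩
    · rw [tropFold_succ_true] at h
      have h₀ : tropFold n false (slice (coordProd a b) false) ≤ 1 :=
        tropFold_le_one (coordProd_le_one _ _)
      have h₁ : tropFold n false (slice (coordProd a b) true) ≤ 1 :=
        tropFold_le_one (coordProd_le_one _ _)
      have hmem₀ := ih (hb.slice false)
        (show tropFold n false (slice (coordProd a b) false) = 1 by linarith)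
      have hmem₁ := ih (hb.slice true)
        (show tropFold n false (slice (coordProd a b) true) = 1 by linarith)
      rw [truthTable, List.map_append]
      exact mem_tensorRegex_succ_true.2 ⟨_, hmem₀, _, hmem₁, rfl⟩

theorem agreeCount_le_of_mem_tensorRegex {n : ℕ} {q : Bool} {a b : (Fin n → Bool) → Bool}
    (hb : IndepOfMaxCoords n q b) {x : List (Option Bool)}
    (hx : x ∈ (tensorRegex n q a).matches') :
    (agreeCount x ((truthTable n b).map some) : ℚ) ≤ 2 ^ n * tropFold n q (coordProd a b) := by
  induction n generalizing q x with
  | zero =>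
    rw [tensorRegex, RegularExpression.matches'_char] at hx
    obtain rfl : x = _ := hx
    show _ ≤ 1 * coordProd a b Fin.elim0
    simp only [coordProd, truthTable]
    cases a Fin.elim0 <;> cases b Fin.elim0 <;> norm_num [agreeCount]
  | succ n ih =>
    have hcat : ∀ {c₀ c₁ u v}, u ∈ (tensorRegex n (!q) (slice a c₀)).matches' →
        v ∈ (tensorRegex n (!q) (slice a c₁)).matches' →
        (agreeCount (u ++ v)
            ((truthTable n (slice b c₀) ++ truthTable n (slice b c₁)).map some) : ℚ) ≤
          2 ^ n * (tropFold n (!q) (coordProd (slice a c₀) (slice b c₀)) +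
            tropFold n (!q) (coordProd (slice a c₁) (slice b c₁))) := by
      intro c₀ c₁ u v hu hv
      rw [List.map_append, agreeCount_append (by
          rw [List.length_map, length_truthTable, length_of_mem_tensorRegex hu]),
        Nat.cast_add, mul_add]
      exact add_le_add (ih (hb.slice c₀) hu) (ih (hb.slice c₁) hv)
    cases q
    · obtain ⟨c, u, hu, v, hv, rfl⟩ := mem_tensorRegex_succ_false.1 hx
      rw [hb.truthTable_succ_false c, tropFold_succ_false]
      calc _ ≤ 2 ^ n * (tropFold n true (coordProd (slice a c) (slice b c)) +
              tropFold n true (coordProd (slice a c) (slice b c))) := hcat hu hv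
        _ = 2 ^ (n + 1) * tropFold n true (slice (coordProd a b) c) := by
          rw [slice_coordProd]; ring
        _ ≤ _ := by gcongr; cases c; exacts [le_max_left _ _, le_max_right _ _]
    · obtain ⟨u, hu, v, hv, rfl⟩ := mem_tensorRegex_succ_true.1 hx
      calc _ ≤ _ := hcat hu hv
        _ = _ := by simp only [tropFold_succ_true, slice_coordProd, Bool.not_true]; ring

theorem maxSim_tensorRegex_le_tropSim {t : ℕ} (a : (Fin t → Bool) → Bool)
    {b : (Fin t → Bool) → Bool} (hb : MaxInvariant b) :
    maxSim (tensorRegex t true a) ((truthTable t b).map some) ≤ tropSim a b := by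
  rw [tropSim_eq_tropFold_coordProd]
  refine Real.sSup_le ?_ (by exact_mod_cast tropFold_nonneg (coordProd_nonneg a b))
  rintro _ ⟨x, hx, -, rfl⟩
  have hcount := agreeCount_le_of_mem_tensorRegex hb.indepOfMaxCoords hx
  rw [Rat.cast_le, hamSim_eq_agreeCount_div, length_of_mem_tensorRegex hx, Nat.cast_pow,
    Nat.cast_ofNat, div_le_iff₀ (by positivity)]
  linarith

/-- There is a universal constant `C` such that for every even
`t` with `D = 2^t`, every `ε > 0`, and all finite sets `A, B` of tensors of
order `t` with every tensor in `B` max-invariant, there are injective-on-`A`/`B`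
maps `f` (to regular expressions over `{0,1,⊥} = Option Bool`, each of length
at most `2^{C·t}` and with all strings of its language of length exactly `D`)
and `g` (to strings in `{0,1}^D`) such that: if some pair has `s(a,b) = 1` then
some `g b ∈ L(f a)`; and if every pair has `s(a,b) < ε` then every pair has
`MaxSim(f a, g b) < ε`. -/
theorem gap_maxTropSim_to_regexp_string_pair :
    ∃ C : ℕ, 0 < C ∧
      ∀ t : ℕ, Even t →
        ∀ ε : ℚ, 0 < ε →
          ∀ A B : Finset ((Fin t → Bool) → Bool),
            (∀ b ∈ B, MaxInvariant b) →
            ∃ (f : ((Fin t → Bool) → Bool) → RegularExpression (Option Bool))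
              (g : ((Fin t → Bool) → Bool) → List Bool),
              Set.InjOn f A ∧ Set.InjOn g B ∧
              (∀ a ∈ A, reSize (f a) ≤ 2 ^ (C * t)) ∧
              (∀ a ∈ A, ∀ x ∈ (f a).matches', x.length = 2 ^ t) ∧
              (∀ b ∈ B, (g b).length = 2 ^ t) ∧
              ((∃ a ∈ A, ∃ b ∈ B, tropSim a b = 1) →
                ∃ a ∈ A, ∃ b ∈ B, ((g b).map some) ∈ (f a).matches') ∧
              ((∀ a ∈ A, ∀ b ∈ B, tropSim a b < ε) →
                ∀ a ∈ A, ∀ b ∈ B, maxSim (f a) ((g b).map some) < (ε : ℝ)) := by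
  refine ⟨3, by norm_num, fun t _ ε _ A B hB => ⟨tensorRegex t true, truthTable t,
    (tensorRegex_injective t true).injOn, (truthTable_injective t).injOn, fun a _ => ?_,
    fun a _ x hx => length_of_mem_tensorRegex hx, fun b _ => length_truthTable b, ?_, ?_⟩⟩
  · rw [pow_mul]
    exact reSize_tensorRegex_le t true a
  · rintro ⟨a, ha, b, hb, h⟩
    exact ⟨a, ha, b, hb, map_some_truthTable_mem_tensorRegex (hB b hb).indepOfMaxCoords h⟩
  · intro h a ha b hb
    exact (maxSim_tensorRegex_le_tropSim a (hB b hb)).trans_lt (by exact_mod_cast h a ha b hb)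
end

section
/- Let Σ be an alphabet. (i) If R₀ and R₁ are regular expressions over Σ and s is a string of length ℓ ≥ 1 such that L(R₀) and L(R₁) each contain at least one string of length ℓ, then MaxSim([R₀ | R₁], s) = max(MaxSim(R₀, s), MaxSim(R₁, s)). (ii) If R₀ and R₁ are regular expressions whose languages are nonempty and contain only strings of lengths ℓ₀ ≥ 1 and ℓ₁ ≥ 1 respectively, and s₀, s₁ are strings of lengths ℓ₀ and ℓ₁, then MaxSim(R₀ ∘ R₁, s₀s₁) = (ℓ₀·MaxSim(R₀, s₀) + ℓ₁·MaxSim(R₁, s₁))/(ℓ₀ + ℓ₁), where R₀ ∘ R₁ denotes concatenation and s₀s₁ the concatenated string. -/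
/-! The similarity values attained by `R₀ | R₁` are the union of those attained by `R₀` and
by `R₁`. When the words of `R₀` and `R₁` have fixed lengths, the similarity of `x₀x₁` to `s₀s₁` is
the length-weighted mean of the similarities of the two halves, which are chosen independently;
as the attained values form finite sets, the largest weighted mean is the weighted mean of the
maxima. -/

theorem Set.Finite.csSup_image2_of_monotone {α β γ : Type*} [ConditionallyCompleteLinearOrder α]
    [ConditionallyCompleteLinearOrder β] [ConditionallyCompleteLattice γ] {f : α → β → γ}
    {s : Set α} {t : Set β} (hf₁ : ∀ b, Monotone (f · b)) (hf₂ : ∀ a, Monotone (f a))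
    (hs : s.Finite) (ht : t.Finite) (hs₀ : s.Nonempty) (ht₀ : t.Nonempty) :
    sSup (Set.image2 f s t) = f (sSup s) (sSup t) := by
  apply le_antisymm
  · refine csSup_le (hs₀.image2 ht₀) ?_
    rintro _ ⟨a, ha, b, hb, rfl⟩
    exact (hf₁ b (le_csSup hs.bddAbove ha)).trans (hf₂ _ (le_csSup ht.bddAbove hb))
  · exact le_csSup (hs.image2 f ht).bddAbove
      (Set.mem_image2_of_mem (hs₀.csSup_mem hs) (ht₀.csSup_mem ht))

section
variable {α : Type} [DecidableEq α]

-- Multiplied out, this also covers `y = []`, where `hamSim x y` is the junk value `0 / 0 = 0`.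
theorem length_mul_hamSim {x y : List α} (h : x.length = y.length) :
    (y.length : ℝ) * hamSim x y = (x.zip y).countP fun p => decide (p.1 = p.2) := by
  rcases Nat.eq_zero_or_pos y.length with hy | hy
  · simp [List.length_eq_zero_iff.mp hy]
  · simp only [hamSim, h]
    push_cast
    field_simp

theorem hamSim_append {x₀ x₁ s₀ s₁ : List α} (h₀ : x₀.length = s₀.length)
    (h₁ : x₁.length = s₁.length) :
    (hamSim (x₀ ++ x₁) (s₀ ++ s₁) : ℝ) =
      (s₀.length * hamSim x₀ s₀ + s₁.length * hamSim x₁ s₁ : ℝ) / (s₀.length + s₁.length) := by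
  rw [length_mul_hamSim h₀, length_mul_hamSim h₁, hamSim]
  simp [List.zip_append h₀, List.countP_append, h₀, h₁]

def simValues (L : Language α) (b : List α) : Set ℝ :=
  {q | ∃ x ∈ L, x.length = b.length ∧ (hamSim x b : ℝ) = q}

theorem maxSim_eq_sSup_simValues (R : RegularExpression α) (b : List α) :
    maxSim R b = sSup (simValues R.matches' b) := rfl

theorem simValues_finite (L : Language α) (b : List α) : (simValues L b).Finite := by
  refine ((Set.finite_Iic b.length).image fun k : ℕ => (k : ℝ) / b.length).subset ?_
  rintro _ ⟨x, -, hx, rfl⟩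
  refine ⟨(x.zip b).countP fun p => decide (p.1 = p.2), ?_, by simp [hamSim, hx]⟩
  calc (x.zip b).countP _ ≤ (x.zip b).length := List.countP_le_length
    _ ≤ b.length := by simp [List.length_zip, hx]

theorem simValues_nonempty {L : Language α} {b : List α} (h : ∃ x ∈ L, x.length = b.length) :
    (simValues L b).Nonempty :=
  let ⟨x, hx, hlen⟩ := h
  ⟨_, x, hx, hlen, rfl⟩

theorem simValues_add (L₀ L₁ : Language α) (b : List α) :
    simValues (L₀ + L₁) b = simValues L₀ b ∪ simValues L₁ b := by
  ext q
  simp only [simValues, Set.mem_union, Set.mem_ofPred_eq, Language.mem_add, or_and_right,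
    exists_or]

theorem simValues_mul {L₀ L₁ : Language α} {s₀ s₁ : List α}
    (h₀ : ∀ x ∈ L₀, x.length = s₀.length) (h₁ : ∀ x ∈ L₁, x.length = s₁.length) :
    simValues (L₀ * L₁) (s₀ ++ s₁) =
      Set.image2 (fun p q : ℝ => (s₀.length * p + s₁.length * q) / (s₀.length + s₁.length))
        (simValues L₀ s₀) (simValues L₁ s₁) := by
  ext q
  constructor
  · rintro ⟨_, hx, -, rfl⟩
    obtain ⟨x₀, hx₀, x₁, hx₁, rfl⟩ := Language.mem_mul.mp hx
    exact ⟨_, ⟨x₀, hx₀, h₀ x₀ hx₀, rfl⟩, _, ⟨x₁, hx₁, h₁ x₁ hx₁, rfl⟩,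
      (hamSim_append (h₀ x₀ hx₀) (h₁ x₁ hx₁)).symm⟩
  · rintro ⟨_, ⟨x₀, hx₀, hlen₀, rfl⟩, _, ⟨x₁, hx₁, hlen₁, rfl⟩, rfl⟩
    exact ⟨x₀ ++ x₁, Language.mem_mul.mpr ⟨x₀, hx₀, x₁, hx₁, rfl⟩, by simp [hlen₀, hlen₁],
      hamSim_append hlen₀ hlen₁⟩

theorem maxSim_plus (R₀ R₁ : RegularExpression α) (s : List α)
    (h₀ : ∃ x ∈ R₀.matches', x.length = s.length) (h₁ : ∃ x ∈ R₁.matches', x.length = s.length) :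
    maxSim (R₀.plus R₁) s = max (maxSim R₀ s) (maxSim R₁ s) := by
  simp only [maxSim_eq_sSup_simValues]
  rw [RegularExpression.plus_def, RegularExpression.matches'_add, simValues_add,
    csSup_union (simValues_finite _ s).bddAbove (simValues_nonempty h₀)
      (simValues_finite _ s).bddAbove (simValues_nonempty h₁)]

theorem maxSim_comp (R₀ R₁ : RegularExpression α) (s₀ s₁ : List α)
    (hne₀ : ∃ x, x ∈ R₀.matches') (hne₁ : ∃ x, x ∈ R₁.matches')
    (h₀ : ∀ x ∈ R₀.matches', x.length = s₀.length) (h₁ : ∀ x ∈ R₁.matches', x.length = s₁.length) :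
    maxSim (R₀.comp R₁) (s₀ ++ s₁) =
      (s₀.length * maxSim R₀ s₀ + s₁.length * maxSim R₁ s₁) / (s₀.length + s₁.length) := by
  obtain ⟨x₀, hx₀⟩ := hne₀
  obtain ⟨x₁, hx₁⟩ := hne₁
  simp only [maxSim_eq_sSup_simValues]
  rw [RegularExpression.comp_def, RegularExpression.matches'_mul, simValues_mul h₀ h₁]
  exact Set.Finite.csSup_image2_of_monotone (fun _ _ _ h => by beta_reduce; gcongr)
    (fun _ _ _ h => by gcongr) (simValues_finite _ _) (simValues_finite _ _)
    (simValues_nonempty ⟨x₀, hx₀, h₀ x₀ hx₀⟩) (simValues_nonempty ⟨x₁, hx₁, h₁ x₁ hx₁⟩)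

end

/-- (i) If `L(R₀)` and `L(R₁)` each contain a string of
length `ℓ = |s| ≥ 1`, then `MaxSim([R₀ | R₁], s) = max(MaxSim(R₀,s), MaxSim(R₁,s))`.
(ii) If `L(R₀)` and `L(R₁)` are nonempty and contain only strings of lengths
`ℓ₀ ≥ 1` and `ℓ₁ ≥ 1` respectively, and `|s₀| = ℓ₀`, `|s₁| = ℓ₁`, then
`MaxSim(R₀ ∘ R₁, s₀s₁) = (ℓ₀·MaxSim(R₀,s₀) + ℓ₁·MaxSim(R₁,s₁))/(ℓ₀+ℓ₁)`. -/
theorem maxSim_plus_and_comp {α : Type} [DecidableEq α] :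
    (∀ (R₀ R₁ : RegularExpression α) (s : List α) (ℓ : ℕ),
      1 ≤ ℓ → s.length = ℓ →
      (∃ x ∈ R₀.matches', x.length = ℓ) →
      (∃ x ∈ R₁.matches', x.length = ℓ) →
      maxSim (RegularExpression.plus R₀ R₁) s = max (maxSim R₀ s) (maxSim R₁ s)) ∧
    (∀ (R₀ R₁ : RegularExpression α) (ℓ₀ ℓ₁ : ℕ) (s₀ s₁ : List α),
      1 ≤ ℓ₀ → 1 ≤ ℓ₁ →
      (∃ x, x ∈ R₀.matches') → (∃ x, x ∈ R₁.matches') →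
      (∀ x ∈ R₀.matches', x.length = ℓ₀) →
      (∀ x ∈ R₁.matches', x.length = ℓ₁) →
      s₀.length = ℓ₀ → s₁.length = ℓ₁ →
      maxSim (RegularExpression.comp R₀ R₁) (s₀ ++ s₁) =
        ((ℓ₀ : ℝ) * maxSim R₀ s₀ + (ℓ₁ : ℝ) * maxSim R₁ s₁) / ((ℓ₀ : ℝ) + (ℓ₁ : ℝ))) := by
  refine ⟨fun R₀ R₁ s ℓ _ hs h₀ h₁ => ?_,
    fun R₀ R₁ ℓ₀ ℓ₁ s₀ s₁ _ _ hne₀ hne₁ h₀ h₁ hs₀ hs₁ => ?_⟩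
  · subst hs
    exact maxSim_plus R₀ R₁ s h₀ h₁
  · subst hs₀ hs₁
    exact maxSim_comp R₀ R₁ s₀ s₁ hne₀ hne₁ h₀ h₁
end
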